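/- arXiv:1112.0127 — 2 statements merged into one kernel-verified Lean document; each statement's English description precedes it below -/
import Mathlib

section
/- For every even integer k with 4 ≤ k ≤ n and every edge e of K_n, the generalized k-edge-connectivity of K_n minus e is strictly less than n − k/2. -/
open SimpleGraph

variable {V : Type*}

/-- An `S`-Steiner tree in `G`: a subgraph of `G` that is a tree and contains all of `S`. -/
def IsSteinerTree (G : SimpleGraph V) (S : Set V) (T : G.Subgraph) : Prop :=
  S ⊆ T.verts ∧ T.coe.IsTree

/-- The maximum number of pairwise edge-disjoint `S`-Steiner trees in `G`. -/
noncomputable def steinerEdgeConn (G : SimpleGraph V) (S : Set V) : ℕ :=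
  sSup {n : ℕ | ∃ f : Fin n → G.Subgraph, (∀ i, IsSteinerTree G S (f i)) ∧
    ∀ i j, i ≠ j → Disjoint (f i).edgeSet (f j).edgeSet}

/-- The maximum number of pairwise internally disjoint `S`-Steiner trees in `G`. -/
noncomputable def steinerConn (G : SimpleGraph V) (S : Set V) : ℕ :=
  sSup {n : ℕ | ∃ f : Fin n → G.Subgraph, (∀ i, IsSteinerTree G S (f i)) ∧
    ∀ i j, i ≠ j → Disjoint (f i).edgeSet (f j).edgeSet ∧
      (f i).verts ∩ (f j).verts = S}

/-- The generalized `k`-edge-connectivity `λ_k(G)`. -/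
noncomputable def genEdgeConn (G : SimpleGraph V) (k : ℕ) : ℕ :=
  sInf {m : ℕ | ∃ S : Set V, S.ncard = k ∧ steinerEdgeConn G S = m}

/-- The generalized `k`-connectivity `κ_k(G)`. -/
noncomputable def genConn (G : SimpleGraph V) (k : ℕ) : ℕ :=
  sInf {m : ℕ | ∃ S : Set V, S.ncard = k ∧ steinerConn G S = m}

/-- The edge-connectivity `λ(G)`: the least size of a set of edges whose removal
disconnects the graph. -/
noncomputable def edgeConn (G : SimpleGraph V) : ℕ :=
  sInf {m : ℕ | ∃ M : Set (Sym2 V), M ⊆ G.edgeSet ∧ M.ncard = m ∧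
    ¬ (G.deleteEdges M).Connected}

/-- The vertex-connectivity `κ(G)`: the least size of a set of vertices whose removal
leaves a non-connected graph. -/
noncomputable def vertConn (G : SimpleGraph V) : ℕ :=
  sInf {m : ℕ | ∃ A : Set V, A.ncard = m ∧ ¬ (G.induce (Aᶜ : Set V)).Connected}


/-- The minimum degree `δ(G)` (as the least cardinality of a neighbor set). -/
noncomputable def minDeg (G : SimpleGraph V) : ℕ :=
  sInf {d : ℕ | ∃ v : V, (G.neighborSet v).ncard = d}


/-
Let `S` be a `k`-set containing both ends of `e`. An `S`-Steiner tree with vertex set exactly `S`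
has `k - 1` edges, all inside `S`; one with a vertex outside `S` has at least `k` edges meeting `S`.
If `a` of `t` edge-disjoint Steiner trees are of the first kind, they share the `C(k, 2) - 1` edges
of `K_n \ e` inside `S`, so `a < k / 2`; all `t` share the `C(n, 2) - C(n - k, 2)` edges meeting
`S`, so `t k ≤ C(n, 2) - C(n - k, 2) + a`. For even `k` the two bounds give `t < n - k / 2`.
-/

namespace SimpleGraph

variable {G : SimpleGraph V}

theorem Reachable.exists_adj_dist_lt {s r : V} (h : G.Reachable s r) (hs : s ≠ r) :
    ∃ p, G.Adj s p ∧ G.dist p r < G.dist s r := by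
  obtain ⟨w, hw⟩ := h.exists_walk_length_eq_dist
  cases w with
  | nil => exact absurd rfl hs
  | cons hadj w => exact ⟨_, hadj, (dist_le w).trans_lt (by simp [← hw])⟩

namespace Subgraph

theorem edgeSet_subset_sym2 {T : G.Subgraph} {S : Set V} (hS : T.verts ⊆ S) :
    T.edgeSet ⊆ S.sym2 := fun _ hz =>
  Set.mem_sym2_iff_subset.mpr fun _ hx => hS (T.mem_verts_of_mem_edge hz hx)

variable [Finite V]

theorem ncard_edgeSet_add_one_of_isTree {T : G.Subgraph} (hT : T.coe.IsTree) :
    T.edgeSet.ncard + 1 = T.verts.ncard := by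
  rw [← T.image_coe_edgeSet_coe,
    Set.ncard_image_of_injective _ (Sym2.map.injective Subtype.val_injective),
    ← Nat.card_coe_set_eq, ← Nat.card_coe_set_eq]
  exact (isTree_iff_connected_and_card.mp hT).2

/-- Each `s ∈ A` is sent to the edge towards a neighbour closer to `r`; two vertices with the
same edge would each be closer to `r` than the other. -/
theorem Connected.ncard_le_ncard_edgeSet_diff_sym2 {T : G.Subgraph} (hT : T.Connected)
    {A : Set V} (hA : A ⊆ T.verts) {r : V} (hr : r ∈ T.verts) (hrA : r ∉ A) :
    A.ncard ≤ (T.edgeSet \ Aᶜ.sym2).ncard := by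
  have : Nonempty T.verts := ⟨⟨r, hr⟩⟩
  have closer : ∀ s (hs : s ∈ A), ∃ p : T.verts,
      T.coe.Adj ⟨s, hA hs⟩ p ∧ T.coe.dist p ⟨r, hr⟩ < T.coe.dist ⟨s, hA hs⟩ ⟨r, hr⟩ :=
    fun s hs => (hT.coe.preconnected _ _).exists_adj_dist_lt
      (by simpa using ne_of_mem_of_not_mem hs hrA)
  choose! p hadj hlt using closer
  refine Set.ncard_le_ncard_of_injOn (fun s => s(s, ↑(p s))) (fun s hs => ⟨hadj s hs, ?_⟩) ?_
  · simp [hs]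
  · intro s hs t ht hst
    rcases Sym2.eq_iff.mp hst with ⟨rfl, -⟩ | ⟨hs', ht'⟩
    · rfl
    · have hs_lt := hlt s hs
      have ht_lt := hlt t ht
      rw [show p s = ⟨t, hA ht⟩ from Subtype.ext ht'] at hs_lt
      rw [show p t = ⟨s, hA hs⟩ from Subtype.ext hs'.symm] at ht_lt
      omega

end Subgraph

section CompleteGraph

variable [Finite V]

theorem ncard_edgeSet_top_inter_sym2 (W : Set V) :
    ((⊤ : SimpleGraph V).edgeSet ∩ W.sym2).ncard = W.ncard.choose 2 := by
  classical
  have hW := W.toFinite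
  have : (⊤ : SimpleGraph V).edgeSet ∩ W.sym2 = ↑(hW.toFinset.offDiag.image Sym2.mk.uncurry) := by
    ext ⟨x, y⟩
    simp only [Set.mem_inter_iff, mem_edgeSet, top_adj, Set.mk_mem_sym2_iff, Finset.coe_image,
      Set.mem_image, Finset.mem_coe, Finset.mem_offDiag, Set.Finite.mem_toFinset, Prod.exists,
      Function.uncurry_apply_pair, Sym2.eq_iff]
    constructor
    · rintro ⟨hxy, hx, hy⟩
      exact ⟨x, y, ⟨hx, hy, hxy⟩, Or.inl ⟨rfl, rfl⟩⟩
    · rintro ⟨a, b, ⟨ha, hb, hab⟩, ⟨rfl, rfl⟩ | ⟨rfl, rfl⟩⟩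
      exacts [⟨hab, ha, hb⟩, ⟨Ne.symm hab, hb, ha⟩]
  rw [this, Set.ncard_coe_finset, Sym2.card_image_offDiag, Set.ncard_eq_toFinset_card W hW]

theorem ncard_edgeSet_inter_sym2_add_one_le {G : SimpleGraph V} {S : Set V} {e : Sym2 V}
    (he : e ∈ (⊤ : SimpleGraph V).edgeSet ∩ S.sym2) (heG : e ∉ G.edgeSet) :
    (G.edgeSet ∩ S.sym2).ncard + 1 ≤ S.ncard.choose 2 := by
  rw [← ncard_edgeSet_top_inter_sym2, ← Set.ncard_sdiff_singleton_add_one he]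
  gcongr
  · exact Set.toFinite _
  rintro z ⟨hzG, hzS⟩
  exact ⟨⟨edgeSet_mono le_top hzG, hzS⟩, fun hze => heG (Set.mem_singleton_iff.mp hze ▸ hzG)⟩

theorem ncard_edgeSet_diff_compl_sym2_add_choose_two_le (G : SimpleGraph V) (S : Set V) :
    (G.edgeSet \ Sᶜ.sym2).ncard + (Nat.card V - S.ncard).choose 2 ≤ (Nat.card V).choose 2 := by
  have htop := ncard_edgeSet_top_inter_sym2 (V := V) Set.univ
  rw [Set.sym2_univ, Set.inter_univ, Set.ncard_univ] at htop
  have hsplit := Set.ncard_inter_add_ncard_sdiff_eq_ncard (⊤ : SimpleGraph V).edgeSet Sᶜ.sym2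
  rw [ncard_edgeSet_top_inter_sym2, Set.ncard_compl] at hsplit
  have hle : (G.edgeSet \ Sᶜ.sym2).ncard ≤ ((⊤ : SimpleGraph V).edgeSet \ Sᶜ.sym2).ncard :=
    Set.ncard_le_ncard (Set.sdiff_subset_sdiff_left (edgeSet_mono le_top))
  omega

end CompleteGraph

end SimpleGraph

theorem Set.disjoint_sym2_compl {α : Type*} (S : Set α) : Disjoint S.sym2 Sᶜ.sym2 := by
  rw [Set.disjoint_iff_inter_eq_empty, ← Set.sym2_inter, Set.inter_compl_self, Set.sym2_empty]

theorem Sym2.exists_mem_sym2_ncard_eq [Finite V] (e : Sym2 V) {k : ℕ} (h2 : 2 ≤ k)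
    (hk : k ≤ Nat.card V) : ∃ S : Set V, e ∈ S.sym2 ∧ S.ncard = k := by
  induction e using Sym2.ind with
  | h u v =>
    obtain ⟨S, huv, -, hS⟩ := Set.exists_subsuperset_card_eq (Set.subset_univ {u, v})
      ((Set.ncard_insert_le u {v}).trans (by simpa using h2)) (by rwa [Set.ncard_univ])
    exact ⟨S, Set.mk_mem_sym2_iff.mpr ⟨huv (by simp), huv (by simp)⟩, hS⟩

theorem Finset.sum_ncard_le_ncard_of_pairwiseDisjoint {ι α : Type*} {s : Finset ι}
    {E : ι → Set α} {B : Set α} (hB : B.Finite) (hE : ∀ i ∈ s, E i ⊆ B)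
    (hdisj : (s : Set ι).PairwiseDisjoint E) : ∑ i ∈ s, (E i).ncard ≤ B.ncard := by
  rw [← finsum_mem_coe_finset,
    ← s.finite_toSet.ncard_biUnion (fun i hi => hB.subset (hE i hi)) hdisj]
  exact Set.ncard_le_ncard (Set.iUnion₂_subset hE) hB

theorem lt_sub_div_two_of_choose_two_bounds {n k a t m : ℕ} (hk : Even k) (hkn : k ≤ n)
    (hin : a * (k - 1) + 1 ≤ k.choose 2) (hpack : t * k ≤ m + a)
    (hm : m + (n - k).choose 2 ≤ n.choose 2) : t < n - k / 2 := by
  obtain ⟨q, rfl⟩ := hk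
  have hq : (q + q).choose 2 = q * (q + q - 1) := by
    rw [Nat.choose_two_right, show (q + q) * (q + q - 1) = 2 * (q * (q + q - 1)) by ring]
    simp
  have ha : (a : ℚ) + 1 ≤ q := by
    exact_mod_cast Nat.lt_of_mul_lt_mul_right (a := q + q - 1) (by omega)
  have hn : (2 * (n - (q + q)).choose 2 : ℚ) + 2 * m ≤ 2 * n.choose 2 := by
    exact_mod_cast (by omega : 2 * (n - (q + q)).choose 2 + 2 * m ≤ 2 * n.choose 2)
  rw [Nat.cast_choose_two, Nat.cast_choose_two, Nat.cast_sub hkn] at hn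
  have hpack' : (t : ℚ) * (q + q) ≤ m + a := by exact_mod_cast hpack
  have hqn : (q + q : ℚ) ≤ n := by exact_mod_cast hkn
  push_cast at hn
  -- `2 q t ≤ C(n, 2) - C(n - 2 q, 2) + a = q (2 n - 2 q - 1) + a < 2 q (n - q)`
  have : (t : ℚ) + q < n := by nlinarith
  have : t + q < n := by exact_mod_cast this
  omega

section SteinerTree

variable {G : SimpleGraph V} {S : Set V}

theorem genEdgeConn_le_steinerEdgeConn {k : ℕ} (hS : S.ncard = k) :
    genEdgeConn G k ≤ steinerEdgeConn G S :=
  Nat.sInf_le ⟨S, hS, rfl⟩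

theorem steinerEdgeConn_lt_of_forall_lt {m : ℕ}
    (h : ∀ t (f : Fin t → G.Subgraph), (∀ i, IsSteinerTree G S (f i)) →
      (∀ i j, i ≠ j → Disjoint (f i).edgeSet (f j).edgeSet) → t < m) :
    steinerEdgeConn G S < m := by
  have hbound : ∀ t ∈ {t | ∃ f : Fin t → G.Subgraph, (∀ i, IsSteinerTree G S (f i)) ∧
      ∀ i j, i ≠ j → Disjoint (f i).edgeSet (f j).edgeSet}, t < m :=
    fun t ⟨f, hf, hdisj⟩ => h t f hf hdisj
  exact hbound _ (Nat.sSup_mem ⟨0, Fin.elim0, fun i => i.elim0, fun i => i.elim0⟩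
    ⟨m, fun t ht => (hbound t ht).le⟩)

variable [Finite V]

theorem IsSteinerTree.ncard_edgeSet_add_one {T : G.Subgraph} (hT : IsSteinerTree G S T)
    (hS : T.verts ⊆ S) : T.edgeSet.ncard + 1 = S.ncard := by
  rw [Subgraph.ncard_edgeSet_add_one_of_isTree hT.2, hS.antisymm hT.1]

theorem IsSteinerTree.ncard_le_ncard_edgeSet_diff_sym2 {T : G.Subgraph}
    (hT : IsSteinerTree G S T) (hS : ¬T.verts ⊆ S) : S.ncard ≤ (T.edgeSet \ Sᶜ.sym2).ncard := by
  obtain ⟨r, hr, hrS⟩ := Set.not_subset.mp hS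
  exact Subgraph.Connected.ncard_le_ncard_edgeSet_diff_sym2 ⟨hT.2.connected⟩ hT.1 hr hrS

/-- `a` counts the trees whose vertex set is exactly `S`. -/
theorem exists_ncard_bounds_of_steinerPacking {t : ℕ} {f : Fin t → G.Subgraph}
    (hf : ∀ i, IsSteinerTree G S (f i))
    (hdisj : ∀ i j, i ≠ j → Disjoint (f i).edgeSet (f j).edgeSet) :
    ∃ a, a * (S.ncard - 1) ≤ (G.edgeSet ∩ S.sym2).ncard ∧
      t * S.ncard ≤ (G.edgeSet \ Sᶜ.sym2).ncard + a := by
  classical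
  set I := Finset.univ.filter fun i => (f i).verts ⊆ S
  have hpw : ∀ s : Finset (Fin t), (s : Set (Fin t)).PairwiseDisjoint fun i => (f i).edgeSet :=
    fun s i _ j _ hij => hdisj i j hij
  refine ⟨I.card, ?_, ?_⟩
  · calc I.card * (S.ncard - 1) = ∑ i ∈ I, (f i).edgeSet.ncard := by
          rw [Finset.card_eq_sum_ones, Finset.sum_mul]
          refine Finset.sum_congr rfl fun i hi => ?_
          have := (hf i).ncard_edgeSet_add_one (Finset.mem_filter.mp hi).2
          omega
      _ ≤ (G.edgeSet ∩ S.sym2).ncard :=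
          Finset.sum_ncard_le_ncard_of_pairwiseDisjoint (Set.toFinite _)
            (fun i hi => Set.subset_inter (f i).edgeSet_subset
              (Subgraph.edgeSet_subset_sym2 (Finset.mem_filter.mp hi).2)) (hpw I)
  · calc t * S.ncard = ∑ _i : Fin t, S.ncard := by simp
      _ ≤ ∑ i, ((f i).edgeSet \ Sᶜ.sym2).ncard + ∑ i, if i ∈ I then 1 else 0 := by
          rw [← Finset.sum_add_distrib]
          refine Finset.sum_le_sum fun i _ => ?_
          by_cases hi : (f i).verts ⊆ S
          · have hsub := Subgraph.edgeSet_subset_sym2 hi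
            rw [sdiff_eq_left.mpr ((S.disjoint_sym2_compl).mono_left hsub),
              ← (hf i).ncard_edgeSet_add_one hi]
            simp [I, hi]
          · simpa [I, hi] using (hf i).ncard_le_ncard_edgeSet_diff_sym2 hi
      _ ≤ (G.edgeSet \ Sᶜ.sym2).ncard + I.card := by
          rw [Finset.sum_boole, Nat.cast_id, Finset.filter_mem_eq_inter, Finset.univ_inter]
          gcongr
          exact Finset.sum_ncard_le_ncard_of_pairwiseDisjoint (Set.toFinite _)
            (fun i _ => Set.sdiff_subset_sdiff_left (f i).edgeSet_subset)
            (fun i hi j hj hij => (hpw _ hi hj hij).mono Set.sdiff_subset Set.sdiff_subset)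

theorem steinerEdgeConn_lt_of_notMem_edgeSet (hS : Even S.ncard) {e : Sym2 V}
    (he : e ∈ (⊤ : SimpleGraph V).edgeSet ∩ S.sym2) (heG : e ∉ G.edgeSet) :
    steinerEdgeConn G S < Nat.card V - S.ncard / 2 :=
  steinerEdgeConn_lt_of_forall_lt fun _ _ hf hdisj =>
    have ⟨_, hin, hpack⟩ := exists_ncard_bounds_of_steinerPacking hf hdisj
    lt_sub_div_two_of_choose_two_bounds hS (Set.ncard_le_card S)
      ((Nat.add_le_add_right hin 1).trans (ncard_edgeSet_inter_sym2_add_one_le he heG)) hpack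
      (ncard_edgeSet_diff_compl_sym2_add_choose_two_le G S)

end SteinerTree

theorem genEdgeConn_complete_minus_edge (n k : ℕ) (hk : Even k) (h4 : 4 ≤ k) (hkn : k ≤ n)
    (e : Sym2 (Fin n)) (he : e ∈ (⊤ : SimpleGraph (Fin n)).edgeSet) :
    genEdgeConn ((⊤ : SimpleGraph (Fin n)).deleteEdges {e}) k < n - k / 2 := by
  obtain ⟨S, heS, hS⟩ := e.exists_mem_sym2_ncard_eq (k := k) (by omega) (by simpa using hkn)
  have hlt := steinerEdgeConn_lt_of_notMem_edgeSet
    (G := (⊤ : SimpleGraph (Fin n)).deleteEdges {e}) (S := S) (hS ▸ hk) ⟨he, heS⟩ (by simp)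
  rw [hS, Nat.card_fin] at hlt
  exact (genEdgeConn_le_steinerEdgeConn hS).trans_lt hlt
end

section
/- For any graph G of order n ≥ k ≥ 3, the product κ_k(G) · κ_k(Ḡ) satisfies 0 ≤ κ_k(G) · κ_k(Ḡ) ≤ ((n − ⌈k/2⌉)/2)². -/
open SimpleGraph

variable {V : Type*}

/-! Fix a `k`-set `S`. The internally disjoint `S`-Steiner trees of `G` and of `Gᶜ` together are
pairwise edge-disjoint `S`-Steiner trees of the complete graph `K_n`, and there are at most
`n - ⌈k/2⌉` of those; AM–GM then bounds the product. To count them, note that a tree with vertex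
set exactly `S` uses `k - 1` of the `k(k-1)/2` edges inside `S`, so there are at most `k/2` such
trees, while every other tree has at least `k` edges meeting `S`: sending `v ∈ S` to the first edge
of a shortest path from `v` to a fixed vertex outside `S` is injective, since if two vertices
shared that edge, each would be strictly closer to the target than the other. Comparing with the
`k(k-1)/2 + k(n-k)` edges of `K_n` meeting `S` gives the bound. -/

open Finset
open scoped Function

def edgesMeeting (S : Set V) : Set (Sym2 V) := {e | ∃ v ∈ e, v ∈ S}

lemma edgesMeeting_mono {S S' : Set V} (h : S ⊆ S') : edgesMeeting S ⊆ edgesMeeting S' :=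
  fun _ ⟨v, hv, hvS⟩ => ⟨v, hv, h hvS⟩

lemma Finset.sum_ncard_le_ncard_of_pairwiseDisjoint_s12 {ι α : Type*} {t : Finset ι}
    {A : ι → Set α} {U : Set α} (hU : U.Finite) (hAU : ∀ i ∈ t, A i ⊆ U)
    (hA : (t : Set ι).PairwiseDisjoint A) :
    ∑ i ∈ t, (A i).ncard ≤ U.ncard := by
  rw [← finsum_mem_coe_finset,
    ← t.finite_toSet.ncard_biUnion (fun i hi => hU.subset (hAU i hi)) hA]
  exact Set.ncard_le_ncard (Set.iUnion₂_subset hAU) hU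

namespace SimpleGraph

variable {G : SimpleGraph V}

theorem Connected.exists_adj_dist_lt (hG : G.Connected) {v r : V} (h : v ≠ r) :
    ∃ u, G.Adj v u ∧ G.dist u r < G.dist v r := by
  obtain ⟨p, hp⟩ := hG.exists_walk_length_eq_dist v r
  cases p with
  | nil => exact absurd rfl h
  | cons hadj q =>
    rw [Walk.length_cons] at hp
    exact ⟨_, hadj, by have := G.dist_le q; omega⟩

theorem Connected.ncard_le_ncard_edgeSet_inter_edgesMeeting [Finite V] (hG : G.Connected)
    {S : Set V} {r : V} (hr : r ∉ S) : S.ncard ≤ (G.edgeSet ∩ edgesMeeting S).ncard := by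
  have hne : ∀ v ∈ S, v ≠ r := fun v hv h => hr (h ▸ hv)
  choose! p hadj hcloser using fun v (hv : v ∈ S) => hG.exists_adj_dist_lt (hne v hv)
  refine Set.ncard_le_ncard_of_injOn (fun v => s(v, p v))
    (fun v hv => ⟨hadj v hv, v, Sym2.mem_mk_left _ _, hv⟩) ?_ (Set.toFinite _)
  intro v hv w hw h
  rcases Sym2.eq_iff.mp h with ⟨rfl, -⟩ | ⟨hvw, hwv⟩
  · rfl
  · have hv' := hcloser v hv
    have hw' := hcloser w hw
    rw [hwv] at hv'
    rw [← hvw] at hw'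
    omega

lemma edgeSet_inter_edgesMeeting_subset [Fintype V] [DecidableEq V] (G : SimpleGraph V)
    (s : Finset V) :
    G.edgeSet ∩ edgesMeeting ↑s ⊆
      ↑(s.offDiag.image Sym2.mk.uncurry ∪ (s ×ˢ sᶜ).image Sym2.mk.uncurry) := by
  rintro e ⟨he, v, hv, hvs⟩
  obtain ⟨w, rfl⟩ := Sym2.mem_iff_exists.mp hv
  have hvw : G.Adj v w := he
  rw [mem_coe, mem_union, mem_image, mem_image]
  by_cases hw : w ∈ s
  · exact Or.inl ⟨(v, w), mem_offDiag.mpr ⟨hvs, hw, hvw.ne⟩, rfl⟩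
  · exact Or.inr ⟨(v, w), mem_product.mpr ⟨hvs, mem_compl.mpr hw⟩, rfl⟩

namespace Subgraph

def ofLE {H : SimpleGraph V} (T : G.Subgraph) (h : G ≤ H) : H.Subgraph where
  verts := T.verts
  Adj := T.Adj
  adj_sub hadj := h (T.adj_sub hadj)
  edge_vert := T.edge_vert
  symm := T.symm

lemma edgeSet_subset_image_offDiag [DecidableEq V] {T : G.Subgraph} {s : Finset V}
    (h : T.verts ⊆ s) : T.edgeSet ⊆ ↑(s.offDiag.image Sym2.mk.uncurry) := by
  intro e he
  induction e using Sym2.ind with | h a b =>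
  have hab : T.Adj a b := he
  rw [mem_coe, mem_image]
  exact ⟨(a, b), mem_offDiag.mpr ⟨h (T.edge_vert hab), h (T.edge_vert hab.symm), hab.ne⟩, rfl⟩

theorem ncard_le_ncard_edgeSet_inter_edgesMeeting [Finite V] {T : G.Subgraph}
    (hT : T.Connected) {S : Set V} (hS : S ⊆ T.verts) {r : V} (hr : r ∈ T.verts)
    (hrS : r ∉ S) : S.ncard ≤ (T.edgeSet ∩ edgesMeeting S).ncard := by
  have key := hT.coe.ncard_le_ncard_edgeSet_inter_edgesMeeting (S := Subtype.val ⁻¹' S)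
    (r := ⟨r, hr⟩) hrS
  rw [Set.ncard_preimage_of_injective_subset_range Subtype.val_injective (by simpa using hS),
    ← Set.ncard_image_of_injective _ (Sym2.map.injective Subtype.val_injective)] at key
  refine key.trans (Set.ncard_le_ncard ?_ (Set.toFinite _))
  rintro _ ⟨e, ⟨he, v, hv, hvS⟩, rfl⟩
  exact ⟨T.image_coe_edgeSet_coe ▸ Set.mem_image_of_mem _ he, v, Sym2.mem_map.mpr ⟨v, hv, rfl⟩,
    hvS⟩

theorem ncard_sub_one_le_ncard_edgeSet_inter_edgesMeeting [Finite V] {T : G.Subgraph}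
    (hT : T.Connected) {S : Set V} (hS : S ⊆ T.verts) :
    S.ncard - 1 ≤ (T.edgeSet ∩ edgesMeeting S).ncard := by
  rcases S.eq_empty_or_nonempty with rfl | ⟨r, hr⟩
  · simp
  calc S.ncard - 1 = (S \ {r}).ncard := (Set.ncard_sdiff_singleton_of_mem hr).symm
    _ ≤ (T.edgeSet ∩ edgesMeeting (S \ {r})).ncard :=
      T.ncard_le_ncard_edgeSet_inter_edgesMeeting hT (Set.sdiff_subset.trans hS) (hS hr)
        (fun h => h.2 rfl)
    _ ≤ (T.edgeSet ∩ edgesMeeting S).ncard :=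
      Set.ncard_le_ncard (Set.inter_subset_inter_right _ (edgesMeeting_mono Set.sdiff_subset))
        (Set.toFinite _)

end Subgraph

end SimpleGraph

lemma two_mul_add_add_le {B m k d : ℕ} (hk : 2 ≤ k) (hB : 2 * (B * (k - 1)) ≤ k * (k - 1))
    (htot : 2 * (B * (k - 1) + m * k) ≤ k * (k - 1) + 2 * (k * d)) :
    2 * (B + m) + k ≤ 2 * (k + d) := by
  obtain ⟨j, rfl⟩ : ∃ j, k = j + 1 := ⟨k - 1, by omega⟩
  rw [Nat.add_sub_cancel] at hB htot
  have hB' : 2 * B ≤ j + 1 := Nat.le_of_mul_le_mul_right (by linarith) (by omega : 0 < j)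
  have : (j + 1) * (2 * (B + m) + (j + 1)) ≤ (j + 1) * (2 * (j + 1 + d)) := by nlinarith
  exact Nat.le_of_mul_le_mul_left this (by omega)

theorem two_mul_card_add_ncard_le_of_pairwise_disjoint_edgeSet [Fintype V]
    {G : SimpleGraph V} {ι : Type*} [Fintype ι] {S : Set V} (hS : 2 ≤ S.ncard)
    (T : ι → G.Subgraph) (hconn : ∀ i, (T i).Connected) (hST : ∀ i, S ⊆ (T i).verts)
    (hdisj : Pairwise (Disjoint on fun i => (T i).edgeSet)) :
    2 * Fintype.card ι + S.ncard ≤ 2 * Fintype.card V := by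
  classical
  obtain ⟨s, rfl⟩ := S.toFinite.exists_finset_coe
  rw [Set.ncard_coe_finset] at hS ⊢
  set A : ι → Set (Sym2 V) := fun i => (T i).edgeSet ∩ edgesMeeting ↑s
  set inner := s.offDiag.image Sym2.mk.uncurry
  set cross := (s ×ˢ sᶜ).image Sym2.mk.uncurry
  set P := univ.filter fun i => (T i).verts ⊆ s
  set Q := univ.filter fun i => ¬ (T i).verts ⊆ s
  have hAdisj (t : Finset ι) : (t : Set ι).PairwiseDisjoint A := fun i _ j _ hij =>
    (hdisj hij).mono Set.inter_subset_left Set.inter_subset_left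
  have hP (i : ι) : #s - 1 ≤ (A i).ncard := by
    simpa using (T i).ncard_sub_one_le_ncard_edgeSet_inter_edgesMeeting (hconn i) (hST i)
  have hQ (i : ι) (hi : i ∈ Q) : #s ≤ (A i).ncard := by
    obtain ⟨r, hr, hrs⟩ := Set.not_subset.mp (mem_filter.mp hi).2
    simpa using (T i).ncard_le_ncard_edgeSet_inter_edgesMeeting (hconn i) (hST i) hr hrs
  have hinner : #P * (#s - 1) ≤ #inner := calc
    #P * (#s - 1) ≤ ∑ i ∈ P, (A i).ncard := card_nsmul_le_sum _ _ _ fun i _ => hP i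
    _ ≤ (inner : Set (Sym2 V)).ncard := sum_ncard_le_ncard_of_pairwiseDisjoint_s12 (Set.toFinite _)
      (fun i hi => Set.inter_subset_left.trans
        (Subgraph.edgeSet_subset_image_offDiag (mem_filter.mp hi).2)) (hAdisj P)
    _ = #inner := Set.ncard_coe_finset _
  have htotal : #P * (#s - 1) + #Q * #s ≤ #inner + #cross := calc
    _ ≤ ∑ i ∈ P, (A i).ncard + ∑ i ∈ Q, (A i).ncard :=
      add_le_add (card_nsmul_le_sum _ _ _ fun i _ => hP i) (card_nsmul_le_sum _ _ _ hQ)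
    _ = ∑ i, (A i).ncard := sum_filter_add_sum_filter_not _ _ _
    _ ≤ (↑(inner ∪ cross) : Set (Sym2 V)).ncard := sum_ncard_le_ncard_of_pairwiseDisjoint_s12
      (Set.toFinite _) (fun i _ => (Set.inter_subset_inter_left _ (T i).edgeSet_subset).trans
        (edgeSet_inter_edgesMeeting_subset G s)) (hAdisj univ)
    _ ≤ #inner + #cross := by rw [Set.ncard_coe_finset]; exact card_union_le _ _
  have hcard : #P + #Q = Fintype.card ι := card_filter_add_card_filter_not _
  have hinner_card : 2 * #inner = #s * (#s - 1) :=
    (Sym2.two_mul_card_image_offDiag s).trans (by rw [offDiag_card, Nat.mul_sub_one])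
  have hcross_card : #cross ≤ #s * (Fintype.card V - #s) :=
    card_image_le.trans (by rw [card_product, card_compl])
  have hsV := card_le_univ s
  have := two_mul_add_add_le (B := #P) (m := #Q) (d := Fintype.card V - #s) hS (by omega)
    (by omega)
  omega

lemma IsSteinerTree.ofLE {G H : SimpleGraph V} {S : Set V} {T : G.Subgraph}
    (hT : IsSteinerTree G S T) (h : G ≤ H) : IsSteinerTree H S (T.ofLE h) :=
  hT

lemma IsSteinerTree.connected {G : SimpleGraph V} {S : Set V} {T : G.Subgraph}
    (hT : IsSteinerTree G S T) : T.Connected :=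
  ⟨hT.2.connected⟩

lemma steinerConn_mem [Fintype V] (G : SimpleGraph V) {S : Set V} (hS : 2 ≤ S.ncard) :
    steinerConn G S ∈ {t : ℕ | ∃ T : Fin t → G.Subgraph, (∀ i, IsSteinerTree G S (T i)) ∧
      ∀ i j, i ≠ j → Disjoint (T i).edgeSet (T j).edgeSet ∧ (T i).verts ∩ (T j).verts = S} := by
  refine Nat.sSup_mem ⟨0, Fin.elim0, fun i => i.elim0, fun i => i.elim0⟩ ⟨Fintype.card V, ?_⟩
  rintro t ⟨T, hT, hdisj⟩
  have := two_mul_card_add_ncard_le_of_pairwise_disjoint_edgeSet hS T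
    (fun i => (hT i).connected) (fun i => (hT i).1) (fun i j hij => (hdisj i j hij).1)
  rw [Fintype.card_fin] at this
  omega

theorem steinerConn_add_steinerConn_compl_le [Fintype V] (G : SimpleGraph V) {S : Set V}
    (hS : 2 ≤ S.ncard) :
    2 * (steinerConn G S + steinerConn Gᶜ S) + S.ncard ≤ 2 * Fintype.card V := by
  obtain ⟨T, hT, hTdisj⟩ := steinerConn_mem G hS
  obtain ⟨T', hT', hT'disj⟩ := steinerConn_mem Gᶜ hS
  have hGG' : Disjoint G.edgeSet Gᶜ.edgeSet := disjoint_edgeSet.mpr disjoint_compl_right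
  let F : Fin (steinerConn G S) ⊕ Fin (steinerConn Gᶜ S) → (⊤ : SimpleGraph V).Subgraph :=
    Sum.elim (fun i => (T i).ofLE le_top) (fun i => (T' i).ofLE le_top)
  have hF : ∀ i, IsSteinerTree ⊤ S (F i) := by
    rintro (i | i)
    · exact (hT i).ofLE le_top
    · exact (hT' i).ofLE le_top
  have hFdisj : Pairwise (Disjoint on fun i => (F i).edgeSet) := by
    rintro (i | i) (j | j) hij
    · exact (hTdisj i j (by simpa using hij)).1
    · exact hGG'.mono (T i).edgeSet_subset (T' j).edgeSet_subset
    · exact hGG'.symm.mono (T' i).edgeSet_subset (T j).edgeSet_subset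
    · exact (hT'disj i j (by simpa using hij)).1
  simpa [mul_add] using two_mul_card_add_ncard_le_of_pairwise_disjoint_edgeSet hS F
    (fun i => (hF i).connected) (fun i => (hF i).1) hFdisj

lemma genConn_le_steinerConn (G : SimpleGraph V) {S : Set V} {k : ℕ} (hS : S.ncard = k) :
    genConn G k ≤ steinerConn G S :=
  Nat.sInf_le ⟨S, hS, rfl⟩

lemma cast_mul_le_sq_half_of_add_le {a b N : ℕ} (h : a + b ≤ N) :
    ((a * b : ℕ) : ℚ) ≤ ((N : ℚ) / 2) ^ 2 := by
  have h' : (a : ℚ) + b ≤ N := by exact_mod_cast h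
  push_cast
  nlinarith [sq_nonneg ((a : ℚ) - b), (Nat.cast_nonneg a : (0 : ℚ) ≤ a),
    (Nat.cast_nonneg b : (0 : ℚ) ≤ b)]

theorem nordhausGaddum_prod {V : Type*} [Fintype V] (G : SimpleGraph V) (n k : ℕ)
    (hn : Fintype.card V = n) (h3 : 3 ≤ k) (hkn : k ≤ n) :
    0 ≤ genConn G k * genConn Gᶜ k ∧
    ((genConn G k * genConn Gᶜ k : ℕ) : ℚ) ≤ (((n - (k + 1) / 2 : ℕ) : ℚ) / 2) ^ 2 := by
  refine ⟨Nat.zero_le _, cast_mul_le_sq_half_of_add_le ?_⟩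
  obtain ⟨s, -, hs⟩ := exists_subset_card_eq (show k ≤ #(univ : Finset V) by simpa [hn])
  have hS : (s : Set V).ncard = k := by rw [Set.ncard_coe_finset, hs]
  have hsum := steinerConn_add_steinerConn_compl_le G (S := s) (by omega)
  have hG := genConn_le_steinerConn G hS
  have hGc := genConn_le_steinerConn Gᶜ hS
  omega
end
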